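/- Let n ≥ 2 and let F = x₀(x₀² + x₁² + ⋯ + xₙ²) ∈ ℂ[x₀,…,xₙ]. Then the degree-2 part F^⊥₂ of the apolar ideal of F has dim_ℂ F^⊥₂ = binom(n+1, 2), and the only common zero in ℂ^{n+1} of all quadrics in F^⊥₂ is the origin. -/

import Mathlib

open MvPolynomial

noncomputable def diffOpMonomial {m : ℕ} (α : Fin m →₀ ℕ) :
    MvPolynomial (Fin m) ℂ →ₗ[ℂ] MvPolynomial (Fin m) ℂ :=
  ((List.finRange m).map fun i =>
    ((pderiv (R := ℂ) i).toLinearMap) ^ (α i)).prod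

noncomputable def diffAct {m : ℕ} :
    MvPolynomial (Fin m) ℂ →ₗ[ℂ] (MvPolynomial (Fin m) ℂ →ₗ[ℂ] MvPolynomial (Fin m) ℂ) :=
  (MvPolynomial.basisMonomials (Fin m) ℂ).constr ℂ diffOpMonomial

noncomputable def DiffSpan {m : ℕ} (f : MvPolynomial (Fin m) ℂ) :
    Submodule ℂ (MvPolynomial (Fin m) ℂ) :=
  Submodule.span ℂ (Set.range fun α : Fin m →₀ ℕ => diffOpMonomial α f)

/-- The annihilator `f^⊥` of a polynomial `f`, as a `ℂ`-subspace of the ring of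
differential operators (it is in fact an ideal). -/
noncomputable def perp {m : ℕ} (f : MvPolynomial (Fin m) ℂ) :
    Submodule ℂ (MvPolynomial (Fin m) ℂ) :=
  LinearMap.ker (diffAct.flip f)

/-- An ideal `I` is apolar to `F` if `I ⊆ F^⊥`, i.e. every `D ∈ I` annihilates `F`. -/
def IsApolarTo {m : ℕ} (I : Ideal (MvPolynomial (Fin m) ℂ))
    (F : MvPolynomial (Fin m) ℂ) : Prop :=
  ∀ D ∈ I, diffAct D F = 0

/-- A homogeneous ideal is saturated (with respect to the irrelevant maximal ideal). -/
def IsSaturatedIdeal {m : ℕ} (I : Ideal (MvPolynomial (Fin m) ℂ)) : Prop :=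
  ∀ g : MvPolynomial (Fin m) ℂ, (∀ i : Fin m, X i * g ∈ I) → g ∈ I

/-- The Hilbert function of `T/I` in degree `e`: `dim_ℂ (T/I)_e = dim T_e − dim I_e`. -/
noncomputable def hilb {m : ℕ} (I : Ideal (MvPolynomial (Fin m) ℂ)) (e : ℕ) : ℕ :=
  Module.finrank ℂ (homogeneousSubmodule (Fin m) ℂ e) -
    Module.finrank ℂ
      (Submodule.restrictScalars ℂ I ⊓ homogeneousSubmodule (Fin m) ℂ e :
        Submodule ℂ (MvPolynomial (Fin m) ℂ))

/-- `I` defines a zero-dimensional subscheme of length `r`: it is homogeneous,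
saturated, and `dim_ℂ (T/I)_e = r` for all sufficiently large `e`. -/
def DefinesLength {m : ℕ} (I : Ideal (MvPolynomial (Fin m) ℂ)) (r : ℕ) : Prop :=
  (∀ g ∈ I, ∀ j : ℕ, homogeneousComponent j g ∈ I) ∧
  IsSaturatedIdeal I ∧
  ∃ e₀ : ℕ, ∀ e ≥ e₀, hilb I e = r

/-- The cactus rank of `F`: the minimal length of an apolar zero-dimensional subscheme. -/
noncomputable def cactusRank {m : ℕ} (F : MvPolynomial (Fin m) ℂ) : ℕ :=
  sInf {r : ℕ | ∃ I : Ideal (MvPolynomial (Fin m) ℂ), IsApolarTo I F ∧ DefinesLength I r}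

/-- Dehomogenization with respect to `x₀`: `f = F(1, x₁, …, xₙ)`. -/
noncomputable def dehom {n : ℕ} (F : MvPolynomial (Fin (n + 1)) ℂ) :
    MvPolynomial (Fin n) ℂ :=
  aeval (fun i : Fin (n + 1) =>
    Fin.cases (motive := fun _ => MvPolynomial (Fin n) ℂ) 1 (fun j => X j) i) F

/-- Homogenization with respect to a new variable `y₀`. -/
noncomputable def homogenize {n : ℕ} (g : MvPolynomial (Fin n) ℂ) :
    MvPolynomial (Fin (n + 1)) ℂ :=
  ∑ j ∈ Finset.range (g.totalDegree + 1),
    (X 0 : MvPolynomial (Fin (n + 1)) ℂ) ^ (g.totalDegree - j) *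
      rename Fin.succ (homogeneousComponent j g)

/-- `N_d`: `2·C(n+k,k)` if `d = 2k+1`, and `C(n+k,k) + C(n+k+1,k+1)` if `d = 2k+2`. -/
def Nd (n d : ℕ) : ℕ :=
  if d % 2 = 1 then 2 * Nat.choose (n + d / 2) (d / 2)
  else Nat.choose (n + d / 2 - 1) (d / 2 - 1) + Nat.choose (n + d / 2) (d / 2)

/-!
A quadric `D` acts on `F = x₀ (x₀² + ⋯ + xₙ²)` through second partial derivatives, and
`∂ᵢ∂ⱼF = 2 (δⱼ₀ xᵢ + δᵢ₀ xⱼ + δᵢⱼ x₀)`. So `D ↦ D(F)` maps the `C(n+2, 2)` quadrics onto the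
`n + 1` linear forms, and `F^⊥₂`, its kernel, has dimension `C(n+2, 2) - (n + 1) = C(n+1, 2)`.

Among the apolar quadrics are `yᵢyⱼ` and `yᵢ² - yⱼ²` for distinct `i, j ≥ 1`, and `y₀² - 3yⱼ²`.
At a common zero `p`, choosing `j ≥ 1` distinct from `i ≥ 1` (possible as `n ≥ 2`) gives
`pᵢ⁴ = pᵢ²pⱼ² = (pᵢpⱼ)² = 0`, and then `p₀² = 3p₁² = 0`.
-/

theorem List.prod_map_mul_of_commute {M ι : Type*} [Monoid M] (l : List ι) (f g : ι → M)
    (hc : ∀ a b, Commute (g a) (f b)) :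
    (l.map fun i => f i * g i).prod = (l.map f).prod * (l.map g).prod := by
  induction l with
  | nil => simp
  | cons a l ih =>
    have hcomm : Commute (g a) (l.map f).prod :=
      Commute.list_prod_right _ _ fun x hx => by
        obtain ⟨b, -, rfl⟩ := List.mem_map.mp hx
        exact hc a b
    simp only [List.map_cons, List.prod_cons, ih, mul_assoc, hcomm.left_comm]

theorem Submodule.finrank_ker_inf_add_finrank_map {K V V' : Type*} [DivisionRing K]
    [AddCommGroup V] [Module K V] [AddCommGroup V'] [Module K V'] (f : V →ₗ[K] V')
    (W : Submodule K V) [FiniteDimensional K W] :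
    Module.finrank K (LinearMap.ker f ⊓ W : Submodule K V) + Module.finrank K (W.map f) =
      Module.finrank K W := by
  rw [← LinearMap.finrank_range_add_finrank_ker (f.domRestrict W), LinearMap.range_domRestrict,
    LinearMap.ker_domRestrict, add_comm,
    ← (Submodule.comapSubtypeEquivOfLe inf_le_right).finrank_eq,
    Submodule.comap_inf, Submodule.comap_subtype_self, inf_top_eq]

namespace MvPolynomial

theorem pderiv_comm {R σ : Type*} [CommRing R] (i j : σ) (f : MvPolynomial σ R) :
    pderiv i (pderiv j f) = pderiv j (pderiv i f) := by
  have h : ⁅pderiv i, pderiv j⁆ = (0 : Derivation R (MvPolynomial σ R) (MvPolynomial σ R)) :=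
    derivation_ext fun k => by
      classical
      rw [Derivation.commutator_apply]
      simp only [pderiv_X, Pi.single_apply]
      split_ifs <;> simp
  rw [← sub_eq_zero, ← Derivation.commutator_apply, h, Derivation.zero_apply]

theorem commute_pderiv {R σ : Type*} [CommRing R] (i j : σ) :
    Commute (pderiv i : Derivation R (MvPolynomial σ R) _).toLinearMap (pderiv j).toLinearMap :=
  LinearMap.ext fun f => pderiv_comm i j f

theorem pderiv_sum_X_sq {R σ : Type*} [CommSemiring R] [Fintype σ] (j : σ) :
    pderiv j (∑ k, X k ^ 2 : MvPolynomial σ R) = 2 * X j := by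
  rw [map_sum, Finset.sum_eq_single j (fun k _ hk => by simp [pderiv_X_of_ne hk])
    (by simp)]
  simp

theorem finrank_homogeneousSubmodule {σ K : Type*} [Fintype σ] [Field K] (d : ℕ) :
    Module.finrank K (homogeneousSubmodule σ K d) = (Fintype.card σ + d - 1).choose d := by
  classical
  let degEquiv : Sym σ d ≃ {α : σ →₀ ℕ | α.degree = d} :=
    (Sym.equivNatSum σ d).trans
      (Equiv.subtypeEquivRight fun α => by simp [Finsupp.degree_apply, Finsupp.sum])
  have : Fintype {α : σ →₀ ℕ | α.degree = d} := Fintype.ofEquiv _ degEquiv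
  rw [((LinearEquiv.ofEq _ _ (homogeneousSubmodule_eq_finsupp_supported σ K d)).trans
    (AddMonoidAlgebra.supportedEquivFinsupp _)).finrank_eq, Module.finrank_finsupp_self,
    ← Fintype.card_congr degEquiv, Sym.card_sym_eq_choose]

theorem homogeneousSubmodule_two_eq_span {R σ : Type*} [CommSemiring R] :
    homogeneousSubmodule σ R 2 =
      Submodule.span R (Set.range fun p : σ × σ => X p.1 * X p.2) := by
  rw [← homogeneousSubmodule_one_pow, pow_two, homogeneousSubmodule_one_eq_span_X,
    Submodule.span_mul_span]
  congr 1
  ext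
  simp [Set.mem_mul]

theorem X_mul_X_mem_homogeneousSubmodule_two {R σ : Type*} [CommSemiring R] (i j : σ) :
    (X i * X j : MvPolynomial σ R) ∈ homogeneousSubmodule σ R 2 :=
  (isHomogeneous_X R i).mul (isHomogeneous_X R j)

end MvPolynomial

section DiffAct

variable {m : ℕ}

theorem diffOpMonomial_add (α β : Fin m →₀ ℕ) :
    diffOpMonomial (α + β) = diffOpMonomial α * diffOpMonomial β := by
  rw [diffOpMonomial, diffOpMonomial, diffOpMonomial, ← List.prod_map_mul_of_commute _ _ _
    fun a b => (commute_pderiv a b).pow_pow _ _]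
  simp only [Finsupp.add_apply, pow_add]

theorem diffOpMonomial_single (i : Fin m) :
    diffOpMonomial (Finsupp.single i 1) = (pderiv i : Derivation ℂ _ _).toLinearMap := by
  rw [diffOpMonomial, List.prod_map_eq_pow_single i _
    fun k hk _ => by rw [Finsupp.single_eq_of_ne hk, pow_zero]]
  simp [List.count_finRange]

theorem diffAct_monomial (α : Fin m →₀ ℕ) (c : ℂ) :
    diffAct (monomial α c) = c • diffOpMonomial α := by
  have hbasis : monomial α c = c • basisMonomials (Fin m) ℂ α := by
    rw [coe_basisMonomials, smul_monomial, smul_eq_mul, mul_one]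
  rw [diffAct, hbasis, map_smul, Module.Basis.constr_basis]

theorem diffAct_X_mul_X (i j : Fin m) (f : MvPolynomial (Fin m) ℂ) :
    diffAct (X i * X j) f = pderiv i (pderiv j f) := by
  rw [X, X, monomial_mul, one_mul, diffAct_monomial, one_smul, diffOpMonomial_add,
    diffOpMonomial_single, diffOpMonomial_single]
  rfl

end DiffAct

section Cubic

variable {n : ℕ}

noncomputable def cubic (n : ℕ) : MvPolynomial (Fin (n + 1)) ℂ := X 0 * ∑ i, X i ^ 2

noncomputable def apolarQuadrics (n : ℕ) : Submodule ℂ (MvPolynomial (Fin (n + 1)) ℂ) :=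
  LinearMap.ker (diffAct.flip (cubic n)) ⊓ homogeneousSubmodule (Fin (n + 1)) ℂ 2

theorem pderiv_cubic (j : Fin (n + 1)) :
    pderiv j (cubic n) = (if j = 0 then ∑ k, X k ^ 2 else 0) + 2 • (X 0 * X j) := by
  rw [cubic, pderiv_mul, pderiv_sum_X_sq, pderiv_X, Pi.single_apply, ite_mul, one_mul, zero_mul,
    nsmul_eq_mul, mul_left_comm, Nat.cast_ofNat]
  simp only [eq_comm]

theorem diffAct_X_mul_X_cubic (i j : Fin (n + 1)) :
    diffAct (X i * X j) (cubic n) =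
      2 • ((if j = 0 then X i else 0) + (if i = 0 then X j else 0) +
        (if i = j then X 0 else 0)) := by
  rw [diffAct_X_mul_X, pderiv_cubic, map_add, map_nsmul, apply_ite (pderiv i), pderiv_sum_X_sq,
    map_zero, pderiv_mul, pderiv_X, pderiv_X, Pi.single_apply, Pi.single_apply]
  split_ifs <;> subst_vars <;> simp_all
  abel

theorem map_homogeneousSubmodule_two_cubic :
    (homogeneousSubmodule (Fin (n + 1)) ℂ 2).map (diffAct.flip (cubic n)) =
      homogeneousSubmodule (Fin (n + 1)) ℂ 1 := by
  rw [homogeneousSubmodule_two_eq_span, Submodule.map_span, homogeneousSubmodule_one_eq_span_X,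
    ← Set.range_comp]
  apply le_antisymm
  · rw [Submodule.span_le]
    rintro _ ⟨⟨i, j⟩, rfl⟩
    simp only [Function.comp_apply, LinearMap.flip_apply, diffAct_X_mul_X_cubic]
    refine Submodule.smul_of_tower_mem _ 2 (add_mem (add_mem ?_ ?_) ?_) <;> split_ifs <;>
      first | exact zero_mem _ | exact Submodule.subset_span (Set.mem_range_self _)
  · rw [Submodule.span_le]
    rintro _ ⟨k, rfl⟩
    have himage (i j : Fin (n + 1)) : diffAct (X i * X j) (cubic n) ∈
        Submodule.span ℂ (Set.range (diffAct.flip (cubic n) ∘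
          fun p : Fin (n + 1) × Fin (n + 1) => X p.1 * X p.2)) :=
      Submodule.subset_span ⟨(i, j), rfl⟩
    rw [SetLike.mem_coe]
    rcases eq_or_ne k 0 with rfl | hk
    · convert Submodule.smul_mem _ (6 : ℂ)⁻¹ (himage 0 0) using 1
      rw [diffAct_X_mul_X_cubic]
      simp only [if_true]
      module
    · convert Submodule.smul_mem _ (2 : ℂ)⁻¹ (himage 0 k) using 1
      rw [diffAct_X_mul_X_cubic, if_neg hk, if_pos rfl, if_neg hk.symm]
      module

theorem finrank_apolarQuadrics : Module.finrank ℂ (apolarQuadrics n) = (n + 1).choose 2 := by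
  have : FiniteDimensional ℂ (homogeneousSubmodule (Fin (n + 1)) ℂ 2) :=
    Module.Finite.iff_fg.mpr (homogeneousSubmodule_fg _ _ 2)
  have h := Submodule.finrank_ker_inf_add_finrank_map (diffAct.flip (cubic n))
    (homogeneousSubmodule (Fin (n + 1)) ℂ 2)
  rw [map_homogeneousSubmodule_two_cubic, finrank_homogeneousSubmodule,
    finrank_homogeneousSubmodule, Fintype.card_fin] at h
  rw [apolarQuadrics]
  simp only [add_tsub_cancel_right, Nat.add_one_sub_one, Nat.choose_one_right,
    Nat.choose_succ_succ (n + 1) 1, Nat.succ_eq_add_one, Nat.reduceAdd] at h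
  omega

theorem eq_zero_of_forall_apolarQuadrics_eval_eq_zero (hn : 2 ≤ n) (p : Fin (n + 1) → ℂ)
    (hp : ∀ D ∈ apolarQuadrics n, eval p D = 0) : p = 0 := by
  have vanish (D : MvPolynomial (Fin (n + 1)) ℂ) (h2 : D ∈ homogeneousSubmodule _ ℂ 2)
      (hD : diffAct D (cubic n) = 0) : eval p D = 0 :=
    hp D ⟨hD, h2⟩
  have hmul {i j : Fin (n + 1)} (hi : i ≠ 0) (hj : j ≠ 0) (hij : i ≠ j) : p i * p j = 0 := by
    simpa using vanish _ (X_mul_X_mem_homogeneousSubmodule_two i j)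
      (by simp [diffAct_X_mul_X_cubic, hi, hj, hij])
  have hsq {i j : Fin (n + 1)} (hi : i ≠ 0) (hj : j ≠ 0) : p i * p i = p j * p j := by
    have := vanish (X i * X i - X j * X j)
      (sub_mem (X_mul_X_mem_homogeneousSubmodule_two i i)
        (X_mul_X_mem_homogeneousSubmodule_two j j))
      (by simp [diffAct_X_mul_X_cubic, hi, hj])
    simpa [sub_eq_zero] using this
  have hsq_zero {j : Fin (n + 1)} (hj : j ≠ 0) : p 0 * p 0 = 3 * (p j * p j) := by
    have := vanish (X 0 * X 0 - (3 : ℂ) • (X j * X j))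
      (sub_mem (X_mul_X_mem_homogeneousSubmodule_two 0 0)
        (Submodule.smul_mem _ _ (X_mul_X_mem_homogeneousSubmodule_two j j)))
      (by simp [diffAct_X_mul_X_cubic, hj]; module)
    simpa [sub_eq_zero] using this
  let one : Fin (n + 1) := ⟨1, by omega⟩
  let two : Fin (n + 1) := ⟨2, by omega⟩
  have hone : one ≠ 0 := by simp [one, Fin.ext_iff]
  have htwo : two ≠ 0 := by simp [two, Fin.ext_iff]
  have hsucc_zero {i : Fin (n + 1)} (hi : i ≠ 0) : p i = 0 := by
    obtain ⟨j, hj, hij⟩ : ∃ j, j ≠ 0 ∧ i ≠ j := by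
      by_cases h : i = one
      · exact ⟨two, htwo, by simp [h, one, two, Fin.ext_iff]⟩
      · exact ⟨one, hone, h⟩
    have : (p i * p i) * (p i * p i) = 0 := by
      linear_combination (p i * p i) * hsq hi hj + (p i * p j) * hmul hi hj hij
    simpa using this
  funext i
  rcases eq_or_ne i 0 with rfl | hi
  · simpa [hsucc_zero hone] using hsq_zero hone
  · exact hsucc_zero hi

end Cubic

/-- For `n ≥ 2` and `F = x₀(x₀² + ⋯ + xₙ²)`, the degree-2 part of
`F^⊥` has dimension `C(n+1,2)` and its quadrics have only the origin as common zero. -/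
theorem statement11 {n : ℕ} (hn : 2 ≤ n)
    (F : MvPolynomial (Fin (n + 1)) ℂ)
    (hF : F = X 0 * ∑ i : Fin (n + 1), X i ^ 2) :
    Module.finrank ℂ
      (LinearMap.ker ((diffAct (m := n + 1)).flip F) ⊓
        homogeneousSubmodule (Fin (n + 1)) ℂ 2 :
        Submodule ℂ (MvPolynomial (Fin (n + 1)) ℂ)) = Nat.choose (n + 1) 2 ∧
    ∀ p : Fin (n + 1) → ℂ,
      (∀ D : MvPolynomial (Fin (n + 1)) ℂ, D ∈ homogeneousSubmodule (Fin (n + 1)) ℂ 2 →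
        diffAct D F = 0 → eval p D = 0) → p = 0 := by
  subst hF
  exact ⟨finrank_apolarQuadrics, fun p hp =>
    eq_zero_of_forall_apolarQuadrics_eval_eq_zero hn p fun D ⟨hD, h2⟩ => hp D h2 hD⟩
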